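/- Let F be a field of characteristic p > 0, α ∈ F, β ∈ F^×, and let E = F[℘^{-1}(α)] be the corresponding Artin–Schreier extension (assumed a field of degree p over F). If β is a norm from E/F, i.e., β = N_{E/F}(f) for some f ∈ E, then the cyclic algebra [α,β)_{p,F} is split. -/

import Mathlib

/-- The defining relations of the cyclic `p`-algebra `[α,β)_{p,F}`:
`i^p - i = α`, `j^p = β`, `j i = (i+1) j`, where `i` and `j` are the images of
the free generators indexed by `false` and `true` respectively. -/
inductive CyclicRel (F : Type) [Field F] (p : ℕ) (α β : F) :
    FreeAlgebra F Bool → FreeAlgebra F Bool → Prop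
  | i : CyclicRel F p α β (FreeAlgebra.ι F false ^ p - FreeAlgebra.ι F false)
      (algebraMap F (FreeAlgebra F Bool) α)
  | j : CyclicRel F p α β (FreeAlgebra.ι F true ^ p)
      (algebraMap F (FreeAlgebra F Bool) β)
  | comm : CyclicRel F p α β (FreeAlgebra.ι F true * FreeAlgebra.ι F false)
      ((FreeAlgebra.ι F false + 1) * FreeAlgebra.ι F true)

/-- The cyclic algebra `[α,β)_{p,F}`, presented by generators and relations. -/
abbrev CyclicAlg (F : Type) [Field F] (p : ℕ) (α β : F) : Type :=
  RingQuot (CyclicRel F p α β)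


/-! The automorphism `σ : i ↦ i + 1` of `E` has order `p`, so it generates `Gal(E/F)` and
`N(f) = ∏ₖ σᵏ f`. Hence on `E` the operators "multiplication by `i`" and `f · σ` satisfy
the defining relations of `[α,β)`, which gives an algebra map `[α,β) → End_F E`. By
Dedekind's independence of characters `End_F E = ⊕ₖ E σᵏ`, so this map is onto (`f` is
invertible since `β ≠ 0`). Since `[α,β)` is spanned by the `p²` monomials `iᵃ jᵇ` and
`dim End_F E = p²`, it is an isomorphism, and `End_F E ≃ M_p(F)`. -/

open Polynomial Module Submodule

namespace Submodule

variable {R A : Type*} [CommSemiring R] [Semiring A] [Algebra R A]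

def leftStabilizer (W : Submodule R A) : Subalgebra R A where
  carrier := {a | ∀ w ∈ W, a * w ∈ W}
  mul_mem' ha hb w hw := by rw [mul_assoc]; exact ha _ (hb w hw)
  add_mem' ha hb w hw := by rw [add_mul]; exact add_mem (ha w hw) (hb w hw)
  algebraMap_mem' r w hw := by
    rw [Algebra.algebraMap_eq_smul_one, smul_mul_assoc, one_mul]; exact W.smul_mem r hw

theorem mem_leftStabilizer_span {s : Set A} {a : A}
    (h : ∀ x ∈ s, a * x ∈ span R s) : a ∈ (span R s).leftStabilizer :=
  fun _ hw => (span_le (p := (span R s).comap (LinearMap.mulLeft R a))).mpr h hw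

theorem eq_top_of_adjoin_le_leftStabilizer {W : Submodule R A} {s : Set A}
    (hs : Algebra.adjoin R s = ⊤) (h1 : 1 ∈ W) (hW : s ⊆ W.leftStabilizer) : W = ⊤ := by
  have hstab : W.leftStabilizer = ⊤ := top_le_iff.mp (hs ▸ Algebra.adjoin_le hW)
  refine eq_top_iff.mpr fun a _ => ?_
  simpa using (hstab ▸ Algebra.mem_top : a ∈ W.leftStabilizer) 1 h1

end Submodule

namespace CyclicAlg

variable {F : Type} [Field F] {p : ℕ} {α β : F}

def i : CyclicAlg F p α β := RingQuot.mkAlgHom F _ (FreeAlgebra.ι F false)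

def j : CyclicAlg F p α β := RingQuot.mkAlgHom F _ (FreeAlgebra.ι F true)

theorem i_pow_sub_i : (i : CyclicAlg F p α β) ^ p - i = algebraMap F _ α := by
  have h := RingQuot.mkAlgHom_rel F (CyclicRel.i (F := F) (p := p) (α := α) (β := β))
  rwa [map_sub, map_pow, AlgHom.commutes] at h

theorem j_pow : (j : CyclicAlg F p α β) ^ p = algebraMap F _ β := by
  have h := RingQuot.mkAlgHom_rel F (CyclicRel.j (F := F) (p := p) (α := α) (β := β))
  rwa [map_pow, AlgHom.commutes] at h

theorem semiconjBy_j_i : SemiconjBy (j : CyclicAlg F p α β) i (i + 1) := by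
  have h := RingQuot.mkAlgHom_rel F (CyclicRel.comm (F := F) (p := p) (α := α) (β := β))
  rwa [map_mul, map_mul, map_add, map_one] at h

theorem adjoin_i_j : Algebra.adjoin F {i, j} = (⊤ : Subalgebra F (CyclicAlg F p α β)) := by
  have hrange : Set.range (FreeAlgebra.ι F : Bool → FreeAlgebra F Bool) =
      {FreeAlgebra.ι F false, FreeAlgebra.ι F true} := by
    ext; simp
  rw [i, j, ← Set.image_pair, ← hrange, Algebra.adjoin_image, FreeAlgebra.adjoin_range_ι,
    Algebra.map_top, AlgHom.range_eq_top]
  exact RingQuot.mkAlgHom_surjective F _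

section Lift

variable {B : Type*} [Ring B] [Algebra F B] (u v : B) (hu : u ^ p - u = algebraMap F B α)
  (hv : v ^ p = algebraMap F B β) (huv : v * u = (u + 1) * v)

def lift : CyclicAlg F p α β →ₐ[F] B :=
  RingQuot.liftAlgHom F ⟨FreeAlgebra.lift F fun b => cond b v u, fun _ _ h => by
    cases h <;> simp [hu, hv, huv]⟩

theorem lift_i : lift u v hu hv huv i = u := by
  simp [lift, i, RingQuot.liftAlgHom_mkAlgHom_apply]

theorem lift_j : lift u v hu hv huv j = v := by
  simp [lift, j, RingQuot.liftAlgHom_mkAlgHom_apply]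

end Lift

variable (F p α β) in
def monomial (k : Fin p × Fin p) : CyclicAlg F p α β := i ^ (k.1 : ℕ) * j ^ (k.2 : ℕ)

theorem span_range_monomial (hp : 1 < p) : span F (Set.range (monomial F p α β)) = ⊤ := by
  set W := span F (Set.range (monomial F p α β))
  have mem {a b : ℕ} (ha : a < p) (hb : b < p) : (i ^ a * j ^ b : CyclicAlg F p α β) ∈ W :=
    subset_span ⟨(⟨a, ha⟩, ⟨b, hb⟩), rfl⟩
  have j_pow_mem {b : ℕ} (hb : b ≤ p) : (j ^ b : CyclicAlg F p α β) ∈ W := by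
    rcases hb.lt_or_eq with hb | rfl
    · simpa using mem (a := 0) (by omega) hb
    · rw [j_pow, Algebra.algebraMap_eq_smul_one]
      exact W.smul_mem β (by simpa using mem (a := 0) (b := 0) (by omega) (by omega))
  have hi : i ∈ W.leftStabilizer := by
    refine Submodule.mem_leftStabilizer_span ?_
    rintro _ ⟨⟨a, b⟩, rfl⟩
    rw [monomial, ← mul_assoc, ← pow_succ']
    rcases (show (a : ℕ) + 1 ≤ p from a.2).lt_or_eq with ha | ha
    · exact mem ha b.2
    · rw [ha, sub_eq_iff_eq_add.mp i_pow_sub_i, add_mul, Algebra.algebraMap_eq_smul_one,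
        smul_mul_assoc, one_mul]
      exact add_mem (W.smul_mem α (by simpa using mem (a := 0) (by omega) b.2))
        (by simpa using mem (a := 1) hp b.2)
  have hj : j ∈ W.leftStabilizer := by
    refine Submodule.mem_leftStabilizer_span ?_
    rintro _ ⟨⟨a, b⟩, rfl⟩
    rw [monomial, ← mul_assoc, (semiconjBy_j_i.pow_right a).eq, mul_assoc, ← pow_succ']
    exact pow_mem (add_mem hi (one_mem _)) _ _ (j_pow_mem b.2)
  refine Submodule.eq_top_of_adjoin_le_leftStabilizer adjoin_i_j
    (by simpa using j_pow_mem (b := 0) (by omega)) ?_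
  rintro _ (rfl | rfl)
  exacts [hi, hj]

theorem finiteDimensional (hp : 1 < p) : FiniteDimensional F (CyclicAlg F p α β) :=
  ⟨fg_def.mpr ⟨_, Set.finite_range _, span_range_monomial hp⟩⟩

theorem finrank_le (hp : 1 < p) : finrank F (CyclicAlg F p α β) ≤ p ^ 2 := by
  have := finrank_range_le_card (R := F) (monomial F p α β)
  rwa [Set.finrank, span_range_monomial hp, finrank_top, Fintype.card_prod, Fintype.card_fin,
    ← sq] at this

theorem bijective_of_surjective (hp : 1 < p) {B : Type*} [Ring B] [Algebra F B]
    [FiniteDimensional F B] (hB : finrank F B = p ^ 2) {φ : CyclicAlg F p α β →ₐ[F] B}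
    (hφ : Function.Surjective φ) : Function.Bijective φ := by
  have := finiteDimensional (α := α) (β := β) hp
  have hrank : finrank F (CyclicAlg F p α β) = finrank F B :=
    le_antisymm (hB ▸ finrank_le hp)
      (LinearMap.finrank_le_finrank_of_surjective (f := φ.toLinearMap) hφ)
  exact ⟨(LinearMap.injective_iff_surjective_of_finrank_eq_finrank hrank
    (f := φ.toLinearMap)).mpr hφ, hφ⟩

end CyclicAlg

namespace Polynomial

variable {R : Type*} [Ring R] [Nontrivial R] {p : ℕ}

theorem monic_X_pow_sub_X_sub_C (hp : 1 < p) (a : R) : (X ^ p - X - C a : R[X]).Monic := by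
  rw [sub_sub]
  exact monic_X_pow_sub (by rw [degree_X_add_C]; exact_mod_cast hp)

theorem natDegree_X_pow_sub_X_sub_C (hp : 1 < p) (a : R) :
    (X ^ p - X - C a : R[X]).natDegree = p := by
  rw [sub_sub, natDegree_sub_eq_left_of_natDegree_lt] <;> simp [hp]

end Polynomial

namespace ArtinSchreier

variable {F E : Type*} [Field F] [Field E] [Algebra F E] {p : ℕ} {α : F} {i : E}

theorem minpoly_eq (hp : 1 < p) (hirr : Irreducible (X ^ p - X - C α : F[X]))
    (hi : i ^ p - i = algebraMap F E α) : minpoly F i = X ^ p - X - C α :=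
  (minpoly.eq_of_irreducible_of_monic hirr (by simp [hi]) (monic_X_pow_sub_X_sub_C hp α)).symm

theorem isIntegral (hp : 1 < p)
    (hi : i ^ p - i = algebraMap F E α) : IsIntegral F i :=
  ⟨_, monic_X_pow_sub_X_sub_C hp α, by simp [hi]⟩

theorem finrank_eq (hp : 1 < p) (hirr : Irreducible (X ^ p - X - C α : F[X]))
    (hi : i ^ p - i = algebraMap F E α) (hgen : Algebra.adjoin F {i} = ⊤) : finrank F E = p := by
  rw [(PowerBasis.ofAdjoinEqTop (isIntegral hp hi) hgen).finrank,
    PowerBasis.ofAdjoinEqTop_dim, minpoly_eq hp hirr hi,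
    natDegree_X_pow_sub_X_sub_C hp]

theorem exists_algEquiv_apply_eq_add_one [Fact p.Prime] [CharP E p]
    (hirr : Irreducible (X ^ p - X - C α : F[X])) (hi : i ^ p - i = algebraMap F E α)
    (hgen : Algebra.adjoin F {i} = ⊤) : ∃ σ : Gal(E/F), σ i = i + 1 := by
  have hp := (Fact.out : p.Prime).one_lt
  let pb := PowerBasis.ofAdjoinEqTop (isIntegral hp hi) hgen
  have : FiniteDimensional F E := pb.finite
  have hroot : aeval (i + 1) (minpoly F pb.gen) = 0 := by
    simp [pb, minpoly_eq hp hirr hi, add_pow_char, ← hi]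
  exact ⟨(algEquivEquivAlgHom F E).symm (pb.lift (i + 1) hroot), pb.lift_gen _ hroot⟩

end ArtinSchreier

section AddOneAutomorphism

variable {F E : Type*} [CommRing F] [CommRing E] [Algebra F E] {σ : E ≃ₐ[F] E} {x : E}

theorem AlgEquiv.pow_apply_eq_add_natCast (h : σ x = x + 1) (k : ℕ) : (σ ^ k) x = x + k := by
  induction k with
  | zero => simp
  | succ k ih => rw [pow_succ', AlgEquiv.mul_apply, ih, map_add, h, map_natCast]; push_cast; ring

theorem AlgEquiv.orderOf_eq_of_apply_eq_add_one {p : ℕ} [Fact p.Prime] [CharP E p]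
    (hgen : Algebra.adjoin F {x} = ⊤) (h : σ x = x + 1) : orderOf σ = p := by
  have : Nontrivial E := CharP.nontrivial_of_char_ne_one (Fact.out : p.Prime).ne_one
  refine orderOf_eq_prime (AlgEquiv.coe_toAlgHom_injective (AlgHom.ext_of_adjoin_eq_top hgen ?_))
    fun h1 => by simp [h1] at h
  rintro _ rfl
  simp [pow_apply_eq_add_natCast h]

end AddOneAutomorphism

theorem pow_fin_injective_of_orderOf_eq {G : Type*} [Monoid G] {x : G} {n : ℕ}
    (h : orderOf x = n) : Function.Injective fun k : Fin n => x ^ (k : ℕ) := by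
  subst h
  exact fun a b hab => Fin.ext (pow_injOn_Iio_orderOf a.2 b.2 hab)

section CyclicGalois

variable {F E : Type*} [Field F] [Field E] [Algebra F E] [FiniteDimensional F E]

theorem Algebra.algebraMap_norm_eq_prod_pow {σ : Gal(E/F)} (hσ : orderOf σ = finrank F E)
    (x : E) :
    algebraMap F E (Algebra.norm F x) = ∏ k ∈ Finset.range (finrank F E), (σ ^ k) x := by
  have hcard : Fintype.card Gal(E/F) = finrank F E :=
    le_antisymm AlgEquiv.card_le (hσ ▸ orderOf_le_card_univ)
  have : IsGalois F E :=
    IsGalois.of_card_aut_eq_finrank F E (by rw [Nat.card_eq_fintype_card, hcard])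
  have hbij : Function.Bijective fun k : Fin (finrank F E) => σ ^ (k : ℕ) := by
    rw [Fintype.bijective_iff_injective_and_card, Fintype.card_fin, hcard]
    exact ⟨pow_fin_injective_of_orderOf_eq hσ, rfl⟩
  rw [Algebra.norm_eq_prod_automorphisms, ← Fin.prod_univ_eq_prod_range]
  exact (Fintype.prod_bijective _ hbij _ _ fun _ => rfl).symm

theorem Module.End.exists_sum_lmul_mul_eq {ι : Type*} [Fintype ι] {τ : ι → Gal(E/F)}
    (hτ : Function.Injective τ) (hcard : Fintype.card ι = finrank F E) (T : Module.End F E) :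
    ∃ c : ι → E, ∑ k, Algebra.lmul F E (c k) * (τ k).toLinearMap = T := by
  let Φ : (ι → E) →ₗ[F] Module.End F E := ∑ k,
    (LinearMap.mulRight F (τ k).toLinearMap).comp ((Algebra.lmul F E).toLinearMap.comp
      (LinearMap.proj k))
  have hΦ (c : ι → E) (y : E) : Φ c y = ∑ k, c k * τ k y := by simp [Φ]
  have hinj : Function.Injective Φ := by
    refine (injective_iff_map_eq_zero Φ).mpr fun c hc => ?_
    have hindep : LinearIndependent E fun k => ((τ k : E →* E) : E → E) :=
      (linearIndependent_monoidHom E E).comp _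
        fun a b hab => hτ (AlgEquiv.ext fun y => DFunLike.congr_fun hab y)
    refine funext (Fintype.linearIndependent_iff.mp hindep c (funext fun y => ?_))
    simpa [hΦ] using LinearMap.congr_fun hc y
  have hrank : finrank F (ι → E) = finrank F (Module.End F E) := by
    rw [Module.finrank_pi_fintype, Finset.sum_const, Finset.card_univ, hcard, smul_eq_mul]
    exact (Module.finrank_linearMap F F E E).symm
  obtain ⟨c, hc⟩ := (LinearMap.injective_iff_surjective_of_finrank_eq_finrank hrank).mp hinj T
  exact ⟨c, by ext y; simp [← hc, hΦ]⟩

theorem Subalgebra.eq_top_of_lmul_mem_of_toLinearMap_mem {S : Subalgebra F (Module.End F E)}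
    (hlmul : ∀ c, Algebra.lmul F E c ∈ S) {σ : Gal(E/F)} (hσ : orderOf σ = finrank F E)
    (hσS : σ.toLinearMap ∈ S) : S = ⊤ := by
  refine eq_top_iff.mpr fun T _ => ?_
  obtain ⟨c, rfl⟩ := Module.End.exists_sum_lmul_mul_eq
    (τ := fun k : Fin (finrank F E) => σ ^ (k : ℕ)) (pow_fin_injective_of_orderOf_eq hσ)
    (Fintype.card_fin _) T
  exact sum_mem fun k _ => mul_mem (hlmul _) (AlgEquiv.pow_toLinearMap σ k ▸ pow_mem hσS _)

end CyclicGalois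

section Representation

variable {F E : Type*} [Field F] [Field E] [Algebra F E]

theorem AlgEquiv.toLinearMap_mul_lmul (σ : E ≃ₐ[F] E) (x : E) :
    σ.toLinearMap * Algebra.lmul F E x = Algebra.lmul F E (σ x) * σ.toLinearMap := by
  ext y; simp

theorem lmul_mul_toLinearMap_pow (f : E) (σ : E ≃ₐ[F] E) (n : ℕ) :
    (Algebra.lmul F E f * σ.toLinearMap) ^ n =
      Algebra.lmul F E (∏ k ∈ Finset.range n, (σ ^ k) f) * σ.toLinearMap ^ n := by
  induction n with
  | zero => rw [pow_zero, pow_zero, Finset.prod_range_zero, map_one, one_mul]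
  | succ n ih =>
    have hprod : f * σ (∏ k ∈ Finset.range n, (σ ^ k) f) =
        ∏ k ∈ Finset.range (n + 1), (σ ^ k) f := by
      rw [Finset.prod_range_succ', map_prod, pow_zero, AlgEquiv.one_apply, mul_comm]
      simp only [pow_succ', AlgEquiv.mul_apply]
    rw [pow_succ', ih, pow_succ', ← mul_assoc, mul_assoc _ σ.toLinearMap,
      σ.toLinearMap_mul_lmul, ← mul_assoc, ← map_mul, hprod, mul_assoc]

theorem lmul_mul_toLinearMap_pow_finrank [FiniteDimensional F E] {σ : Gal(E/F)}
    (hσ : orderOf σ = finrank F E) (f : E) :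
    (Algebra.lmul F E f * σ.toLinearMap) ^ finrank F E =
      algebraMap F (Module.End F E) (Algebra.norm F f) := by
  rw [lmul_mul_toLinearMap_pow, ← Algebra.algebraMap_norm_eq_prod_pow hσ,
    ← AlgEquiv.pow_toLinearMap, ← hσ, pow_orderOf_eq_one, AlgEquiv.one_toLinearMap, mul_one,
    AlgHom.commutes]

end Representation

theorem CyclicAlg.exists_surjective_algHom_end {F E : Type} [Field F] [Field E] [Algebra F E]
    [FiniteDimensional F E] {p : ℕ} {α β : F} {i f : E} (hi : i ^ p - i = algebraMap F E α)
    (hgen : Algebra.adjoin F {i} = ⊤) {σ : Gal(E/F)} (hσ : σ i = i + 1) (hσp : orderOf σ = p)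
    (hrank : finrank F E = p) (hf0 : f ≠ 0) (hf : Algebra.norm F f = β) :
    ∃ φ : CyclicAlg F p α β →ₐ[F] Module.End F E, Function.Surjective φ := by
  have hj : (Algebra.lmul F E f * σ.toLinearMap) ^ p = algebraMap F _ β := by
    rw [← hrank, lmul_mul_toLinearMap_pow_finrank (hσp.trans hrank.symm), hf]
  have hji : Algebra.lmul F E f * σ.toLinearMap * Algebra.lmul F E i =
      (Algebra.lmul F E i + 1) * (Algebra.lmul F E f * σ.toLinearMap) := by
    rw [mul_assoc, σ.toLinearMap_mul_lmul, hσ, ← mul_assoc, ← map_mul, mul_comm, map_mul,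
      map_add, map_one, mul_assoc]
  let φ : CyclicAlg F p α β →ₐ[F] Module.End F E :=
    lift _ _ (by rw [← map_pow, ← map_sub, hi, AlgHom.commutes]) hj hji
  have hlmul (c : E) : Algebra.lmul F E c ∈ φ.range := by
    have : Algebra.adjoin F {i} ≤ φ.range.comap (Algebra.lmul F E) :=
      Algebra.adjoin_le (Set.singleton_subset_iff.mpr ⟨CyclicAlg.i, lift_i ..⟩)
    exact this (hgen ▸ Algebra.mem_top)
  have hσφ : σ.toLinearMap = Algebra.lmul F E f⁻¹ * φ CyclicAlg.j := by
    rw [lift_j, ← mul_assoc, ← map_mul, inv_mul_cancel₀ hf0, map_one, one_mul]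
  refine ⟨φ, (AlgHom.range_eq_top φ).mp (Subalgebra.eq_top_of_lmul_mem_of_toLinearMap_mem hlmul
    (hσp.trans hrank.symm) ?_)⟩
  rw [hσφ]
  exact mul_mem (hlmul _) ⟨_, rfl⟩

theorem cyclicAlg_split_of_norm (F : Type) [Field F] (p : ℕ) [Fact p.Prime]
    [CharP F p] (α : F) (β : F) (hβ : β ≠ 0)
    (hirr : Irreducible (X ^ p - X - C α : F[X]))
    (E : Type) [Field E] [Algebra F E] (i : E)
    (hi : i ^ p - i = algebraMap F E α) (hgen : Algebra.adjoin F {i} = ⊤)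
    (f : E) (hf : Algebra.norm F f = β) :
    Nonempty (CyclicAlg F p α β ≃ₐ[F] Matrix (Fin p) (Fin p) F) := by
  have hp := (Fact.out : p.Prime).one_lt
  have : CharP E p := charP_of_injective_algebraMap' F p
  have hrank : finrank F E = p := ArtinSchreier.finrank_eq hp hirr hi hgen
  have : FiniteDimensional F E := Module.finite_of_finrank_pos (hrank ▸ hp.le)
  obtain ⟨σ, hσ⟩ := ArtinSchreier.exists_algEquiv_apply_eq_add_one hirr hi hgen
  have hf0 : f ≠ 0 := by
    rintro rfl
    exact hβ (by simpa using hf.symm)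
  obtain ⟨φ, hφ⟩ := CyclicAlg.exists_surjective_algHom_end (α := α) hi hgen hσ
    (σ.orderOf_eq_of_apply_eq_add_one hgen hσ) hrank hf0 hf
  have hdim : finrank F (Module.End F E) = p ^ 2 :=
    (Module.finrank_linearMap F F E E).trans (by rw [hrank, sq])
  exact ⟨(AlgEquiv.ofBijective φ (CyclicAlg.bijective_of_surjective hp hdim hφ)).trans
    (algEquivMatrix (Module.finBasisOfFinrankEq F E hrank))⟩
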